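/- Suppose g is differentiable. If a mixed stopping strategy p̂ is an equilibrium, then for each x ∈ E the inequalities (I) and (II) hold, and at least one of the following three holds: (I) holds with equality, (II) holds with equality, or the first-order expression f(x) − E_x[φ_p̂(X_1)] + g′(p̂_x h(x) + (1−p̂_x) E_x[ψ_p̂(X_1)]) · (h(x) − E_x[ψ_p̂(X_1)]) equals zero. -/

import Mathlib

/-!
Analytic model of the time-inconsistent stopping framework of Christensen & Lindensjö,
"Time-inconsistent stopping, myopic adjustment & equilibrium stability".

A time-homogeneous Markov chain `X` on a finite state space `E` is encoded by its
transition matrix `P` (`P x y = P_x(X_1 = y)`).  A mixed stopping strategy is a vector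
`p ∈ [0,1]^E`; the associated stopping time is `τ_p = min {n ≥ 0 : Y_n ≤ p_{X_n}}`,
where the `Y_n` are i.i.d. uniform randomization devices.  The quantity
`phi P p f x = E_x[f(X_{τ_p})]` (with the convention `f(X_{τ_p}) := lim_n f(X_n)` on
`{τ_p = ∞}`, the limit existing a.s. by absorption) is realized analytically, via
dominated convergence, as the limit in `n` of the finite-horizon values
`phiSeq P p f n x = E_x[f(X_{τ_p ∧ n})]`, which satisfy the one-step recursion given
by the Markov property.  Likewise `step P v x = E_x[v(X_1)]`.
-/

open Filter

variable {E : Type*}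

/-- One-step expectation operator: `step P v x = E_x[v(X_1)] = ∑ y, P x y * v y`. -/
noncomputable def step [Fintype E] (P : E → E → ℝ) (v : E → ℝ) (x : E) : ℝ :=
  ∑ y, P x y * v y

/-- Finite-horizon value `phiSeq P p f n x = E_x[f(X_{τ_p ∧ n})]`. -/
noncomputable def phiSeq [Fintype E] (P : E → E → ℝ) (p f : E → ℝ) : ℕ → E → ℝ
  | 0 => f
  | n + 1 => fun x => p x * f x + (1 - p x) * step P (phiSeq P p f n) x

/-- `phi P p f x = E_x[f(X_{τ_p})]`, with the convention `f(X_{τ_p}) := lim_n f(X_n)`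
on `{τ_p = ∞}`; by dominated convergence it is the limit of the finite-horizon values. -/
noncomputable def phi [Fintype E] (P : E → E → ℝ) (p f : E → ℝ) (x : E) : ℝ :=
  limUnder atTop fun n => phiSeq P p f n x

/-- `P` is a transition matrix (row-stochastic). -/
def IsTransition [Fintype E] (P : E → E → ℝ) : Prop :=
  (∀ x y, 0 ≤ P x y) ∧ ∀ x, ∑ y, P x y = 1

/-- `a` is an absorbing state of the chain. -/
def IsAbsorbingState (P : E → E → ℝ) (a : E) : Prop := P a a = 1

/-- The chain is absorbing: from each starting state, some absorbing state is reached
with positive probability in a finite number of steps. -/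
def IsAbsorbingChain [Fintype E] [DecidableEq E] (P : E → E → ℝ) : Prop :=
  ∀ x : E, ∃ (a : E) (n : ℕ), IsAbsorbingState P a ∧ 0 < ((Matrix.of P) ^ n) x a

/-- A mixed stopping strategy: a vector in `[0,1]^E`. -/
def IsStrategy (p : E → ℝ) : Prop := ∀ x, p x ∈ Set.Icc (0 : ℝ) 1

/-- `Kval P f h g p x q
      = q f(x) + (1-q) E_x[φ_p(X_1)] + g (q h(x) + (1-q) E_x[ψ_p(X_1)])`. -/
noncomputable def Kval [Fintype E] (P : E → E → ℝ) (f h : E → ℝ) (g : ℝ → ℝ)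
    (p : E → ℝ) (x : E) (q : ℝ) : ℝ :=
  q * f x + (1 - q) * step P (phi P p f) x
    + g (q * h x + (1 - q) * step P (phi P p h) x)

/-- `Jval P f h g p x = φ_p(x) + g(ψ_p(x)) = E_x[f(X_{τ_p})] + g(E_x[h(X_{τ_p})])`. -/
noncomputable def Jval [Fintype E] (P : E → E → ℝ) (f h : E → ℝ) (g : ℝ → ℝ)
    (p : E → ℝ) (x : E) : ℝ :=
  phi P p f x + g (phi P p h x)

/-- Subgame perfect Nash equilibrium (condition (EqI)). -/
def IsEquilibrium [Fintype E] (P : E → E → ℝ) (f h : E → ℝ) (g : ℝ → ℝ)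
    (p : E → ℝ) : Prop :=
  ∀ x : E, ∀ q ∈ Set.Icc (0 : ℝ) 1, Kval P f h g p x q ≤ Jval P f h g p x

/-!
At an equilibrium `p̂`, the one-step recursion `φ_p = p f + (1 - p) E_x[φ_p(X_1)]` (and the same
for `ψ_p`) gives `J(x) = K(x, p̂_x, p̂)`, so the equilibrium condition says that `q ↦ K(x, q, p̂)`
attains its maximum over `[0, 1]` at `q = p̂_x`. Comparing with `q = 1` and `q = 0` gives (I) and
(II); if `p̂_x ∈ {0, 1}` one of them is an equality, and otherwise Fermat's theorem makes the
derivative of `q ↦ K(x, q, p̂)`, which is the first-order expression, vanish.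

The recursion for `φ_p` is the finite-horizon recursion defining `phiSeq` passed to the limit.
The limit exists because the increments of `phiSeq` at time `k` are bounded by the probability of
not being absorbed by time `k`, which decays geometrically since the chain is absorbing.
-/

open Matrix Filter Topology

lemma exists_pow_div_le_mul_pow {r : ℝ} (hr₀ : 0 ≤ r) (hr₁ : r < 1) {m : ℕ} (hm : m ≠ 0) :
    ∃ C ρ : ℝ, ρ < 1 ∧ ∀ k : ℕ, r ^ (k / m) ≤ C * ρ ^ k := by
  set s := max r (1 / 2)
  have hs₀ : 0 < s := lt_max_of_lt_right (by norm_num)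
  have hs₁ : s < 1 := max_lt hr₁ (by norm_num)
  set ρ := s ^ ((m : ℝ)⁻¹)
  have hρ₀ : 0 ≤ ρ := Real.rpow_nonneg hs₀.le _
  have hρm : ρ ^ m = s := Real.rpow_inv_natCast_pow hs₀.le hm
  have hρ₁ : ρ < 1 := by
    by_contra! h
    exact hs₁.not_ge (hρm ▸ one_le_pow₀ h)
  refine ⟨s⁻¹, ρ, hρ₁, fun k => ?_⟩
  have hk : k ≤ m * (k / m) + m := (Nat.lt_mul_div_succ k (Nat.pos_of_ne_zero hm)).le
  calc r ^ (k / m) ≤ s ^ (k / m) := pow_le_pow_left₀ hr₀ (le_max_left _ _) _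
    _ = s⁻¹ * ρ ^ (m * (k / m) + m) := by
        rw [pow_add, pow_mul, hρm]; field_simp
    _ ≤ s⁻¹ * ρ ^ k :=
        mul_le_mul_of_nonneg_left (pow_le_pow_of_le_one hρ₀ hρ₁.le hk) (inv_nonneg.2 hs₀.le)

namespace Matrix

variable {n : Type*} {M : Matrix n n ℝ}

noncomputable def transientIndicator (M : Matrix n n ℝ) : n → ℝ :=
  {b | ¬IsAbsorbingState M b}.indicator 1

lemma transientIndicator_nonneg : 0 ≤ transientIndicator M :=
  Set.indicator_nonneg fun _ _ => zero_le_one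

lemma transientIndicator_le_one : transientIndicator M ≤ 1 :=
  Set.indicator_le_self' fun _ _ => zero_le_one

lemma transientIndicator_eq_zero {a : n} (ha : IsAbsorbingState M a) :
    transientIndicator M a = 0 :=
  Set.indicator_of_notMem (not_not.2 ha) _

lemma transientIndicator_eq_one {b : n} (hb : ¬IsAbsorbingState M b) :
    transientIndicator M b = 1 :=
  Set.indicator_of_mem hb _

variable [Fintype n] [DecidableEq n]

lemma mulVec_mono_of_mem_rowStochastic (hM : M ∈ rowStochastic ℝ n) {v w : n → ℝ}
    (hvw : v ≤ w) : M *ᵥ v ≤ M *ᵥ w :=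
  fun i => Finset.sum_le_sum fun j _ => mul_le_mul_of_nonneg_left (hvw j) (hM.1 i j)

lemma apply_eq_zero_of_isAbsorbingState (hM : M ∈ rowStochastic ℝ n) {a b : n}
    (ha : IsAbsorbingState M a) (hb : b ≠ a) : M a b = 0 := by
  have hrow := sum_row_of_mem_rowStochastic hM a
  rw [← Finset.add_sum_erase _ _ (Finset.mem_univ a), ha, add_eq_left,
    Finset.sum_eq_zero_iff_of_nonneg fun c _ => hM.1 a c] at hrow
  exact hrow b (Finset.mem_erase.2 ⟨hb, Finset.mem_univ b⟩)

lemma mulVec_apply_of_isAbsorbingState (hM : M ∈ rowStochastic ℝ n) {a : n}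
    (ha : IsAbsorbingState M a) (v : n → ℝ) : (M *ᵥ v) a = v a := by
  refine (Finset.sum_eq_single a (fun b _ hb => ?_) (by simp)).trans ?_
  · simp [apply_eq_zero_of_isAbsorbingState hM ha hb]
  · simp [show M a a = 1 from ha]

lemma pow_mulVec_apply_of_isAbsorbingState (hM : M ∈ rowStochastic ℝ n) {a : n}
    (ha : IsAbsorbingState M a) (k : ℕ) (v : n → ℝ) : (M ^ k *ᵥ v) a = v a := by
  induction k with
  | zero => simp
  | succ k ih => rw [pow_succ', ← mulVec_mulVec, mulVec_apply_of_isAbsorbingState hM ha, ih]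

/-- `transientMass M k b` is the probability, starting from `b`, of not being in an absorbing
state at time `k`. -/
noncomputable def transientMass (M : Matrix n n ℝ) (k : ℕ) : n → ℝ :=
  M ^ k *ᵥ transientIndicator M

lemma transientMass_add (j k : ℕ) :
    transientMass M (j + k) = M ^ j *ᵥ transientMass M k := by
  rw [transientMass, transientMass, pow_add, mulVec_mulVec]

lemma transientMass_succ (k : ℕ) :
    transientMass M (k + 1) = M *ᵥ transientMass M k := by
  rw [add_comm, transientMass_add, pow_one]

lemma transientMass_nonneg (hM : M ∈ rowStochastic ℝ n) (k : ℕ) (b : n) :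
    0 ≤ transientMass M k b :=
  nonneg_mulVec_of_mem_rowStochastic (pow_mem hM k) transientIndicator_nonneg b

lemma transientMass_eq_zero (hM : M ∈ rowStochastic ℝ n) {a : n} (ha : IsAbsorbingState M a)
    (k : ℕ) : transientMass M k a = 0 := by
  rw [transientMass, pow_mulVec_apply_of_isAbsorbingState hM ha, transientIndicator_eq_zero ha]

lemma transientMass_le_smul_indicator (hM : M ∈ rowStochastic ℝ n) {k : ℕ} {r : ℝ}
    (hr : ∀ b, transientMass M k b ≤ r) :
    transientMass M k ≤ r • transientIndicator M := by
  intro b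
  by_cases hb : IsAbsorbingState M b
  · simp [transientMass_eq_zero hM hb, transientIndicator_eq_zero hb]
  · simpa [transientIndicator, hb] using hr b

lemma transientMass_le_one (hM : M ∈ rowStochastic ℝ n) (k : ℕ) (b : n) :
    transientMass M k b ≤ 1 := by
  have h := mulVec_mono_of_mem_rowStochastic (pow_mem hM k) (transientIndicator_le_one (M := M)) b
  rwa [one_vecMul_of_mem_rowStochastic (pow_mem hM k)] at h

lemma transientMass_antitone (hM : M ∈ rowStochastic ℝ n) : Antitone (transientMass M) := by
  refine antitone_nat_of_succ_le fun k => ?_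
  calc transientMass M (k + 1) = M ^ k *ᵥ transientMass M 1 := transientMass_add k 1
    _ ≤ M ^ k *ᵥ ((1 : ℝ) • transientIndicator M) :=
        mulVec_mono_of_mem_rowStochastic (pow_mem hM k)
          (transientMass_le_smul_indicator hM (transientMass_le_one hM 1))
    _ = transientMass M k := by rw [one_smul, transientMass]

lemma transientMass_mul_le_pow (hM : M ∈ rowStochastic ℝ n) {m : ℕ} {r : ℝ}
    (hr : ∀ b, transientMass M m b ≤ r) (j : ℕ) (b : n) :
    transientMass M (m * j) b ≤ r ^ j := by
  induction j generalizing b with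
  | zero => simpa using transientMass_le_one hM 0 b
  | succ j ih =>
    have hr₀ : 0 ≤ r := (transientMass_nonneg hM m b).trans (hr b)
    calc transientMass M (m * (j + 1)) b = (M ^ (m * j) *ᵥ transientMass M m) b := by
          rw [mul_add_one, transientMass_add]
      _ ≤ (M ^ (m * j) *ᵥ (r • transientIndicator M)) b :=
          mulVec_mono_of_mem_rowStochastic (pow_mem hM _)
            (transientMass_le_smul_indicator hM hr) b
      _ = r * transientMass M (m * j) b := by rw [mulVec_smul, transientMass]; rfl
      _ ≤ r ^ (j + 1) := by rw [pow_succ']; exact mul_le_mul_of_nonneg_left (ih b) hr₀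

lemma transientMass_le_one_sub (hM : M ∈ rowStochastic ℝ n) {a : n} (ha : IsAbsorbingState M a)
    (k : ℕ) (b : n) : transientMass M k b ≤ 1 - (M ^ k) b a := by
  have hle : transientIndicator M ≤ (1 : n → ℝ) - Pi.single a 1 := by
    intro c
    by_cases hc : c = a
    · simp [hc, transientIndicator_eq_zero ha]
    · simpa [hc] using transientIndicator_le_one c
  have h := mulVec_mono_of_mem_rowStochastic (pow_mem hM k) hle b
  rwa [mulVec_sub, one_vecMul_of_mem_rowStochastic (pow_mem hM k), mulVec_single_one] at h

lemma exists_transientMass_lt_one (hM : M ∈ rowStochastic ℝ n) (habs : IsAbsorbingChain M) :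
    ∃ m, ∀ b, transientMass M m b < 1 := by
  choose a k ha hpos using habs
  refine ⟨Finset.univ.sup k, fun b => ?_⟩
  calc transientMass M (Finset.univ.sup k) b ≤ transientMass M (k b) b :=
        transientMass_antitone hM (Finset.le_sup (Finset.mem_univ b)) b
    _ ≤ 1 - (M ^ k b) b (a b) := transientMass_le_one_sub hM (ha b) _ b
    _ < 1 := sub_lt_self 1 (hpos b)

lemma exists_transientMass_le_geometric [Nonempty n] (hM : M ∈ rowStochastic ℝ n)
    (habs : IsAbsorbingChain M) : ∃ C ρ : ℝ, ρ < 1 ∧ ∀ k b, transientMass M k b ≤ C * ρ ^ k := by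
  obtain ⟨m, hm⟩ := exists_transientMass_lt_one hM habs
  have hm' : ∀ b, transientMass M (m + 1) b < 1 := fun b =>
    (transientMass_antitone hM m.le_succ b).trans_lt (hm b)
  obtain ⟨b₀, hb₀⟩ := Finite.exists_max (transientMass M (m + 1))
  obtain ⟨C, ρ, hρ, hCρ⟩ := exists_pow_div_le_mul_pow (transientMass_nonneg hM _ b₀) (hm' b₀)
    m.succ_ne_zero
  refine ⟨C, ρ, hρ, fun k b => ?_⟩
  calc transientMass M k b ≤ transientMass M ((m + 1) * (k / (m + 1))) b :=
        transientMass_antitone hM (Nat.mul_div_le k (m + 1)) b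
    _ ≤ transientMass M (m + 1) b₀ ^ (k / (m + 1)) := transientMass_mul_le_pow hM hb₀ _ b
    _ ≤ C * ρ ^ k := hCρ k

end Matrix

section Value

variable [Fintype E] {P : E → E → ℝ} {p f : E → ℝ}

lemma IsTransition.mem_rowStochastic [DecidableEq E] (hP : IsTransition P) :
    Matrix.of P ∈ rowStochastic ℝ E :=
  mem_rowStochastic_iff_sum.2 hP

lemma phiSeq_add_two_sub (k : ℕ) (x : E) :
    phiSeq P p f (k + 2) x - phiSeq P p f (k + 1) x
      = (1 - p x) * step P (phiSeq P p f (k + 1) - phiSeq P p f k) x := by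
  simp only [phiSeq, step, Pi.sub_apply, mul_sub, Finset.sum_sub_distrib]
  ring

lemma abs_phiSeq_succ_sub_le [DecidableEq E] (hP : IsTransition P) (hp : IsStrategy p)
    {c : ℝ} (hc : ∀ y, |phiSeq P p f 1 y - f y| ≤ c) (k : ℕ) (x : E) :
    |phiSeq P p f (k + 1) x - phiSeq P p f k x| ≤ c * transientMass (Matrix.of P) k x := by
  induction k generalizing x with
  | zero =>
    by_cases hx : IsAbsorbingState P x
    · have hstep : step P f x = f x := mulVec_apply_of_isAbsorbingState hP.mem_rowStochastic hx f
      rw [transientMass_eq_zero hP.mem_rowStochastic hx, mul_zero, abs_nonpos_iff, sub_eq_zero]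
      change p x * f x + (1 - p x) * step P f x = f x
      rw [hstep]
      ring
    · rw [transientMass, pow_zero, one_mulVec, transientIndicator_eq_one (M := Matrix.of P) hx,
        mul_one]
      exact hc x
  | succ k ih =>
    have hpx : |1 - p x| ≤ 1 := abs_le.2 ⟨by linarith [(hp x).2], by linarith [(hp x).1]⟩
    have hsum : |step P (phiSeq P p f (k + 1) - phiSeq P p f k) x|
        ≤ step P (c • transientMass (Matrix.of P) k) x :=
      (Finset.abs_sum_le_sum_abs _ _).trans <| Finset.sum_le_sum fun y _ => by
        rw [abs_mul, abs_of_nonneg (hP.1 x y)]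
        exact mul_le_mul_of_nonneg_left (ih y) (hP.1 x y)
    calc |phiSeq P p f (k + 2) x - phiSeq P p f (k + 1) x|
        = |1 - p x| * |step P (phiSeq P p f (k + 1) - phiSeq P p f k) x| := by
          rw [phiSeq_add_two_sub, abs_mul]
      _ ≤ 1 * step P (c • transientMass (Matrix.of P) k) x :=
          mul_le_mul hpx hsum (abs_nonneg _) zero_le_one
      _ = c * transientMass (Matrix.of P) (k + 1) x := by
          simp [step, transientMass_succ, mulVec, dotProduct, Finset.mul_sum, mul_left_comm]

lemma tendsto_phiSeq [DecidableEq E] (hP : IsTransition P) (habs : IsAbsorbingChain P)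
    (hp : IsStrategy p) (x : E) :
    Tendsto (fun k => phiSeq P p f k x) atTop (𝓝 (phi P p f x)) := by
  have : Nonempty E := ⟨x⟩
  obtain ⟨C, ρ, hρ, hCρ⟩ := exists_transientMass_le_geometric hP.mem_rowStochastic habs
  obtain ⟨y₀, hy₀⟩ := Finite.exists_max fun y => |phiSeq P p f 1 y - f y|
  refine CauchySeq.tendsto_limUnder <|
    cauchySeq_of_le_geometric ρ (|phiSeq P p f 1 y₀ - f y₀| * C) hρ fun k => ?_
  rw [dist_comm, Real.dist_eq, mul_assoc]
  exact (abs_phiSeq_succ_sub_le hP hp hy₀ k x).trans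
    (mul_le_mul_of_nonneg_left (hCρ k x) (abs_nonneg _))

lemma phi_eq [DecidableEq E] (hP : IsTransition P) (habs : IsAbsorbingChain P)
    (hp : IsStrategy p) (x : E) :
    phi P p f x = p x * f x + (1 - p x) * step P (phi P p f) x :=
  tendsto_nhds_unique ((tendsto_phiSeq hP habs hp x).comp (tendsto_add_atTop_nat 1))
    (((tendsto_finsetSum _ fun y _ =>
      (tendsto_phiSeq hP habs hp y).const_mul (P x y)).const_mul (1 - p x)).const_add _)

end Value

lemma hasDerivAt_mul_add_one_sub_mul (a b q : ℝ) :
    HasDerivAt (fun q => q * a + (1 - q) * b) (a - b) q := by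
  have hline : ⇑(AffineMap.lineMap b a : ℝ →ᵃ[ℝ] ℝ) = fun q => q * a + (1 - q) * b := by
    ext q; rw [AffineMap.lineMap_apply_ring, add_comm]
  exact hline ▸ AffineMap.hasDerivAt_lineMap

section Equilibrium

variable [Fintype E] {P : E → E → ℝ} {f h : E → ℝ} {g : ℝ → ℝ} {p : E → ℝ}

lemma Kval_zero (x : E) :
    Kval P f h g p x 0 = step P (phi P p f) x + g (step P (phi P p h) x) := by
  simp [Kval]

lemma Kval_one (x : E) : Kval P f h g p x 1 = f x + g (h x) := by
  simp [Kval]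

lemma Jval_eq_Kval_self [DecidableEq E] (hP : IsTransition P) (habs : IsAbsorbingChain P)
    (hp : IsStrategy p) (x : E) : Jval P f h g p x = Kval P f h g p x (p x) := by
  rw [Jval, Kval, ← phi_eq hP habs hp, ← phi_eq hP habs hp]

lemma hasDerivAt_Kval (x : E) {q : ℝ}
    (hg : DifferentiableAt ℝ g (q * h x + (1 - q) * step P (phi P p h) x)) :
    HasDerivAt (Kval P f h g p x)
      (f x - step P (phi P p f) x + deriv g (q * h x + (1 - q) * step P (phi P p h) x)
        * (h x - step P (phi P p h) x)) q :=
  (hasDerivAt_mul_add_one_sub_mul _ _ q).add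
    (hg.hasDerivAt.comp q (hasDerivAt_mul_add_one_sub_mul _ _ q))

lemma IsEquilibrium.stop_le_Jval (heq : IsEquilibrium P f h g p) (x : E) :
    f x + g (h x) ≤ Jval P f h g p x :=
  Kval_one (P := P) (p := p) x ▸ heq x 1 ⟨zero_le_one, le_rfl⟩

lemma IsEquilibrium.continue_le_Jval (heq : IsEquilibrium P f h g p) (x : E) :
    step P (phi P p f) x + g (step P (phi P p h) x) ≤ Jval P f h g p x :=
  Kval_zero x ▸ heq x 0 ⟨le_rfl, zero_le_one⟩

end Equilibrium

/-- Theorem 4.1, first part: necessary first-order conditions for an equilibrium when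
`g` is differentiable: conditions (I) and (II) hold at every state, and at least one of
(I), (II) holds with equality or the first-order expression vanishes. -/
theorem necessary_conditions_differentiable [Fintype E] [DecidableEq E]
    (P : E → E → ℝ) (hP : IsTransition P) (habs : IsAbsorbingChain P)
    (f h : E → ℝ) (g : ℝ → ℝ) (hg : Differentiable ℝ g)
    (phat : E → ℝ) (hphat : IsStrategy phat)
    (heq : IsEquilibrium P f h g phat) :
    ∀ x : E,
      (f x + g (h x) ≤ phi P phat f x + g (phi P phat h x)) ∧
      (step P (phi P phat f) x + g (step P (phi P phat h) x)
          ≤ phi P phat f x + g (phi P phat h x)) ∧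
      (phi P phat f x + g (phi P phat h x) = f x + g (h x) ∨
        phi P phat f x + g (phi P phat h x)
          = step P (phi P phat f) x + g (step P (phi P phat h) x) ∨
        f x - step P (phi P phat f) x
          + deriv g (phat x * h x + (1 - phat x) * step P (phi P phat h) x)
            * (h x - step P (phi P phat h) x) = 0) := by
  intro x
  have hJ : Jval P f h g phat x = Kval P f h g phat x (phat x) :=
    Jval_eq_Kval_self hP habs hphat x
  refine ⟨heq.stop_le_Jval x, heq.continue_le_Jval x, ?_⟩
  rcases (hphat x).1.eq_or_lt with h0 | h0
  · exact Or.inr (Or.inl (hJ.trans (h0 ▸ Kval_zero x)))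
  rcases (hphat x).2.eq_or_lt with h1 | h1
  · exact Or.inl (hJ.trans (h1 ▸ Kval_one x))
  have hmax : IsLocalMax (Kval P f h g phat x) (phat x) :=
    mem_of_superset (Icc_mem_nhds h0 h1) fun q hq => (heq x q hq).trans hJ.le
  exact Or.inr (Or.inr (hmax.hasDerivAt_eq_zero (hasDerivAt_Kval x (hg _))))
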